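/- arXiv:2101.03890 — 4 statements merged into one kernel-verified Lean document; each statement's English description precedes it below -/
import Mathlib

section
/- Let (X_i)_{i≥0} be positive, independent, identically distributed real random variables with E[X_i] = μ_X > 0, let (L_i)_{i≥1} be positive, independent, identically distributed real random variables with E[L_i] = μ_L < ∞, and let l_0 > 0 be a constant. Define T = min{ n ≥ 1 : X_0/l_0 + X_1/(l_0+L_1) + X_2/(l_0+L_1+L_2) + ... + X_{n-1}/(l_0+L_1+...+L_{n-1}) ≥ 1 }, with the convention min ∅ = ∞. Then T < ∞ almost surely; i.e., almost surely there exists n ≥ 1 such that the partial sum Σ_{i=0}^{n-1} X_i/(l_0 + Σ_{j=1}^{i} L_j) is at least 1. -/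
/-!
By the strong law of large numbers, almost surely `X₀ + ⋯ + X_{n-1} ∼ n μ_X` and
`l₀ + L₁ + ⋯ + L_n = O(n)`. On the dyadic block `m ≤ i < 2m` every denominator is at most
`l₀ + L₁ + ⋯ + L_{2m}`, so the block contributes at least
`(X_m + ⋯ + X_{2m-1}) / (l₀ + L₁ + ⋯ + L_{2m})`, which is eventually bounded below by a
constant `c > 0`. Hence the partial sums grow at least like `c log₂ n` and exceed `1`.
-/

open MeasureTheory ProbabilityTheory Filter Finset Topology

theorem monotone_sum_range_of_nonneg {M : Type*} [AddCommMonoid M] [PartialOrder M]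
    [IsOrderedAddMonoid M] {f : ℕ → M} (hf : ∀ i, 0 ≤ f i) :
    Monotone fun n => ∑ i ∈ range n, f i :=
  monotone_nat_of_le_succ fun n => by
    rw [sum_range_succ]
    exact le_add_of_nonneg_right (hf n)

theorem tendsto_atTop_of_eventually_add_le_two_mul {S : ℕ → ℝ} (hS : Monotone S) {c : ℝ}
    (hc : 0 < c) (h : ∀ᶠ m in atTop, S m + c ≤ S (2 * m)) : Tendsto S atTop atTop := by
  obtain ⟨N, hN⟩ := eventually_atTop.1 h
  have hgrowth : ∀ k : ℕ, S N + k * c ≤ S (2 ^ k * N) := by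
    intro k
    induction k with
    | zero => simp
    | succ k ih =>
      have hblock := hN (2 ^ k * N) (Nat.le_mul_of_pos_left N (Nat.two_pow_pos k))
      rw [← mul_assoc, ← pow_succ'] at hblock
      push_cast
      linarith
  refine tendsto_atTop_atTop_of_monotone hS fun b => ?_
  obtain ⟨k, hk⟩ := exists_nat_ge ((b - S N) / c)
  refine ⟨2 ^ k * N, le_trans ?_ (hgrowth k)⟩
  linarith [(div_le_iff₀ hc).1 hk]

theorem div_le_sum_Ico_div {K : Type*} [Field K] [LinearOrder K] [IsStrictOrderedRing K]
    {x d : ℕ → K} (hx : ∀ i, 0 ≤ x i) (hd : ∀ i, 0 < d i)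
    (hmono : Monotone d) (m n : ℕ) :
    (∑ i ∈ Ico m n, x i) / d n ≤ ∑ i ∈ Ico m n, x i / d i := by
  rw [sum_div]
  exact sum_le_sum fun i hi =>
    div_le_div_of_nonneg_left (hx i) (hd i) (hmono (mem_Ico.1 hi).2.le)

theorem exists_pos_eventually_le_div {α : Type*} {l : Filter α} [l.NeBot] {u v : α → ℝ}
    {a b : ℝ} (hu : Tendsto u l (𝓝 a)) (ha : 0 < a) (hv : Tendsto v l (𝓝 b))
    (hvpos : ∀ᶠ t in l, 0 < v t) : ∃ c > 0, ∀ᶠ t in l, c ≤ u t / v t := by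
  have hu' : ∀ᶠ t in l, a / 2 < u t := hu.eventually (lt_mem_nhds (half_lt_self ha))
  have hv' : ∀ᶠ t in l, v t < b + 1 := hv.eventually (gt_mem_nhds (lt_add_one b))
  obtain ⟨t₀, hvt₀_pos, hvt₀_lt⟩ := (hvpos.and hv').exists
  refine ⟨a / 2 / (b + 1), div_pos (half_pos ha) (hvt₀_pos.trans hvt₀_lt), ?_⟩
  filter_upwards [hu', hv', hvpos] with t hut hvt_lt hvt_pos
  exact div_le_div₀ (by linarith) hut.le hvt_pos hvt_lt.le

theorem tendsto_mul_div_of_tendsto_div {f : ℕ → ℝ} {a : ℝ} {k : ℕ} (hk : 0 < k)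
    (h : Tendsto (fun n => f n / n) atTop (𝓝 a)) :
    Tendsto (fun n => f (k * n) / n) atTop (𝓝 (k * a)) := by
  refine ((h.comp (tendsto_id.const_mul_atTop' hk)).const_mul (k : ℝ)).congr fun n => ?_
  rcases eq_or_ne (n : ℝ) 0 with hn | hn
  · simp [hn]
  · simp only [Function.comp_apply, id, Nat.cast_mul]
    field_simp

theorem tendsto_sum_div_add_sum_atTop {x l : ℕ → ℝ} {l0 a b : ℝ} (hl0 : 0 < l0)
    (hx : ∀ i, 0 ≤ x i) (hl : ∀ i, 0 ≤ l i)
    (hxa : Tendsto (fun n => (∑ i ∈ range n, x i) / n) atTop (𝓝 a)) (ha : 0 < a)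
    (hlb : Tendsto (fun n => (∑ i ∈ range n, l i) / n) atTop (𝓝 b)) :
    Tendsto (fun n => ∑ i ∈ range n, x i / (l0 + ∑ j ∈ range i, l j)) atTop atTop := by
  set A := fun n => ∑ i ∈ range n, x i
  set d := fun n => l0 + ∑ j ∈ range n, l j
  have hd : ∀ i, 0 < d i := fun i => add_pos_of_pos_of_nonneg hl0 (sum_nonneg fun j _ => hl j)
  have hdmono : Monotone d := fun _ _ hmn =>
    (add_le_add_iff_left l0).2 (monotone_sum_range_of_nonneg hl hmn)
  have hnum : Tendsto (fun m => (A (2 * m) - A m) / m) atTop (𝓝 (2 * a - a)) := by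
    simpa only [A, sub_div, Nat.cast_ofNat] using
      (tendsto_mul_div_of_tendsto_div two_pos hxa).sub hxa
  have hden : Tendsto (fun m => d (2 * m) / m) atTop (𝓝 (0 + 2 * b)) := by
    simpa only [d, add_div, Nat.cast_ofNat] using
      (tendsto_const_div_atTop_nhds_zero_nat l0).add (tendsto_mul_div_of_tendsto_div two_pos hlb)
  obtain ⟨c, hc, hblock⟩ := exists_pos_eventually_le_div hnum (by linarith) hden
    ((eventually_gt_atTop 0).mono fun m hm => div_pos (hd _) (Nat.cast_pos.2 hm))
  refine tendsto_atTop_of_eventually_add_le_two_mul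
    (monotone_sum_range_of_nonneg fun i => div_nonneg (hx i) (hd i).le) hc ?_
  filter_upwards [hblock, eventually_gt_atTop 0] with m hm hm0
  rw [div_div_div_cancel_right₀ (Nat.cast_ne_zero.2 hm0.ne')] at hm
  calc ∑ i ∈ range m, x i / d i + c
      ≤ ∑ i ∈ range m, x i / d i + (∑ i ∈ Ico m (2 * m), x i) / d (2 * m) := by
        rw [sum_Ico_eq_sub _ (by omega)]
        gcongr
    _ ≤ ∑ i ∈ range m, x i / d i + ∑ i ∈ Ico m (2 * m), x i / d i := by
        gcongr
        exact div_le_sum_Ico_div hx hd hdmono _ _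
    _ = ∑ i ∈ range (2 * m), x i / d i := sum_range_add_sum_Ico _ (by omega)

theorem ant_on_rubber_rope_reaches_end_general
    {Ω : Type*} [MeasurableSpace Ω] (μ : Measure Ω)
    (X L : ℕ → Ω → ℝ) (l0 μX μL : ℝ) (hl0 : 0 < l0)
    (hXpos : ∀ i, ∀ᵐ ω ∂μ, 0 < X i ω) (hLpos : ∀ i, ∀ᵐ ω ∂μ, 0 < L i ω)
    (hXindep : iIndepFun X μ)
    (hLindep : iIndepFun L μ)
    (hXident : ∀ i, IdentDistrib (X i) (X 0) μ μ)
    (hLident : ∀ i, IdentDistrib (L i) (L 0) μ μ)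
    (hXint : ∀ i, Integrable (X i) μ) (hLint : ∀ i, Integrable (L i) μ)
    (hXmean : ∀ i, ∫ ω, X i ω ∂μ = μX) (hLmean : ∀ i, ∫ ω, L i ω ∂μ = μL)
    (hμX : 0 < μX) :
    ∀ᵐ ω ∂μ, ∃ n : ℕ, 1 ≤ n ∧
      1 ≤ ∑ i ∈ Finset.range n, X i ω / (l0 + ∑ j ∈ Finset.range i, L j ω) := by
  have hXlaw := strong_law_ae_real X (hXint 0) (fun i j hij => hXindep.indepFun hij) hXident
  have hLlaw := strong_law_ae_real L (hLint 0) (fun i j hij => hLindep.indepFun hij) hLident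
  rw [hXmean 0] at hXlaw
  rw [hLmean 0] at hLlaw
  filter_upwards [hXlaw, hLlaw, ae_all_iff.2 hXpos, ae_all_iff.2 hLpos] with ω hX hL hXω hLω
  have hsum := tendsto_sum_div_add_sum_atTop hl0 (fun i => (hXω i).le) (fun i => (hLω i).le)
    hX hμX hL
  exact ((eventually_ge_atTop 1).and (hsum.eventually_ge_atTop 1)).exists

/-- **The stochastic "ant on a rubber rope", Theorem 1.**
`X i` is the distance the ant crawls during the `(i+1)`-th second,
`L j` is the amount by which the rope stretches at the end of the `(j+1)`-th second
(so `L 0, L 1, …` play the role of `L₁, L₂, …`), and the rope has length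
`l₀ + L₁ + ⋯ + Lᵢ = l0 + ∑ j in range i, L j` after `i` stretchings.
Almost surely there is a time `n ≥ 1` at which the accumulated fraction of the rope
covered by the ant, `∑_{i=0}^{n-1} X i / (l0 + ∑_{j<i} L j)`, reaches `1`;
i.e. `T = min {n : partial sum ≥ 1} < ∞` almost surely. -/
theorem ant_on_rubber_rope_reaches_end
    {Ω : Type*} [MeasurableSpace Ω] (μ : Measure Ω) [IsProbabilityMeasure μ]
    (X L : ℕ → Ω → ℝ) (l0 μX μL : ℝ) (hl0 : 0 < l0)
    (hXmeas : ∀ i, Measurable (X i)) (hLmeas : ∀ i, Measurable (L i))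
    (hXpos : ∀ i, ∀ᵐ ω ∂μ, 0 < X i ω) (hLpos : ∀ i, ∀ᵐ ω ∂μ, 0 < L i ω)
    (hXindep : iIndepFun X μ)
    (hLindep : iIndepFun L μ)
    (hXident : ∀ i, IdentDistrib (X i) (X 0) μ μ)
    (hLident : ∀ i, IdentDistrib (L i) (L 0) μ μ)
    (hXint : ∀ i, Integrable (X i) μ) (hLint : ∀ i, Integrable (L i) μ)
    (hXmean : ∀ i, ∫ ω, X i ω ∂μ = μX) (hLmean : ∀ i, ∫ ω, L i ω ∂μ = μL)
    (hμX : 0 < μX) :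
    ∀ᵐ ω ∂μ, ∃ n : ℕ, 1 ≤ n ∧
      1 ≤ ∑ i ∈ Finset.range n, X i ω / (l0 + ∑ j ∈ Finset.range i, L j ω) :=
  ant_on_rubber_rope_reaches_end_general μ X L l0 μX μL hl0 hXpos hLpos hXindep hLindep hXident
    hLident hXint hLint hXmean hLmean hμX
end

section
/- Let (X_i)_{i≥0} be positive, independent, identically distributed real random variables with E[X_i] = μ_X > 0, let (L_i)_{i≥1} be positive, independent, identically distributed real random variables with E[L_i] = μ_L < ∞, and let l_0 > 0 be a constant. Then, almost surely, the series X_0/l_0 + X_1/(l_0+L_1) + X_2/(l_0+L_1+L_2) + ... diverges to ∞; i.e., almost surely Σ_{i=0}^{∞} X_i/(l_0 + Σ_{j=1}^{i} L_j) = ∞. -/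
/-! By the strong law of large numbers, almost surely the ant crawls about `μX n` in the first
`n` seconds and the rope has length `O(n)` by then. So on every block of seconds `[n, 2n)` with `n`
large the ant gains a fixed positive fraction of the rope, and these gains add up without bound. -/

open MeasureTheory ProbabilityTheory Filter Finset Topology

theorem tendsto_atTop_of_monotone_of_add_le_double {α : Type*} [AddCommGroup α] [LinearOrder α]
    [IsOrderedAddMonoid α] [Archimedean α] {T : ℕ → α} (hT : Monotone T) {c : α} (hc : 0 < c)
    (h : ∀ᶠ n in atTop, T n + c ≤ T (2 * n)) : Tendsto T atTop atTop := by
  obtain ⟨N, hN⟩ := (h.and (eventually_ge_atTop 1)).exists_forall_of_atTop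
  have hdouble : ∀ k : ℕ, T N + k • c ≤ T (2 ^ k * N) := by
    intro k
    induction k with
    | zero => simp
    | succ k ih =>
      have hk := (hN (2 ^ k * N) (Nat.le_mul_of_pos_left N (by positivity))).1
      rw [succ_nsmul, ← add_assoc, pow_succ', mul_assoc]
      exact (add_le_add_left ih c).trans hk
  refine tendsto_atTop_atTop_of_monotone hT fun b => ?_
  obtain ⟨k, hk⟩ := Archimedean.arch (b - T N) hc
  exact ⟨2 ^ k * N, (sub_le_iff_le_add'.1 hk).trans (hdouble k)⟩

theorem tendsto_comp_two_mul_div {s : ℕ → ℝ} {a : ℝ}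
    (hs : Tendsto (fun n : ℕ => s n / n) atTop (𝓝 a)) :
    Tendsto (fun n : ℕ => s (2 * n) / n) atTop (𝓝 (2 * a)) := by
  have h2 : Tendsto (fun n : ℕ => s (2 * n) / (2 * n : ℕ)) atTop (𝓝 a) :=
    hs.comp (tendsto_id.const_mul_atTop' two_pos)
  refine (h2.const_mul 2).congr fun n => ?_
  push_cast
  rw [mul_div_assoc', mul_div_mul_left _ _ two_ne_zero]

theorem sum_Ico_div_le_sum_Ico_div {x D : ℕ → ℝ} (hx : ∀ i, 0 ≤ x i) (hD : ∀ i, 0 < D i)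
    (hDmono : Monotone D) (m n : ℕ) :
    (∑ i ∈ Ico m n, x i) / D n ≤ ∑ i ∈ Ico m n, x i / D i := by
  rw [sum_div]
  exact sum_le_sum fun i hi =>
    div_le_div_of_nonneg_left (hx i) (hD i) (hDmono (mem_Ico.1 hi).2.le)

theorem tendsto_sum_div_add_partial_sum_atTop {x ℓ : ℕ → ℝ} {l0 a b : ℝ} (hl0 : 0 < l0)
    (hx : ∀ i, 0 ≤ x i) (hℓ : ∀ i, 0 ≤ ℓ i) (ha : 0 < a)
    (hsx : Tendsto (fun n : ℕ => (∑ i ∈ range n, x i) / n) atTop (𝓝 a))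
    (hsl : Tendsto (fun n : ℕ => (∑ i ∈ range n, ℓ i) / n) atTop (𝓝 b)) :
    Tendsto (fun n => ∑ i ∈ range n, x i / (l0 + ∑ j ∈ range i, ℓ j)) atTop atTop := by
  set D : ℕ → ℝ := fun i => l0 + ∑ j ∈ range i, ℓ j
  have hD : ∀ i, 0 < D i := fun i => add_pos_of_pos_of_nonneg hl0 (sum_nonneg fun j _ => hℓ j)
  have hDmono : Monotone D := fun m n hmn =>
    add_le_add_right (sum_le_sum_of_subset_of_nonneg (range_mono hmn) fun j _ _ => hℓ j) l0
  have hTmono : Monotone fun n => ∑ i ∈ range n, x i / D i := fun m n hmn =>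
    sum_le_sum_of_subset_of_nonneg (range_mono hmn) fun i _ _ => div_nonneg (hx i) (hD i).le
  have hcrawl : Tendsto (fun n : ℕ => (∑ i ∈ Ico n (2 * n), x i) / n) atTop (𝓝 a) := by
    have := (tendsto_comp_two_mul_div hsx).sub hsx
    rw [two_mul a, add_sub_cancel_right] at this
    refine this.congr fun n => ?_
    rw [sum_Ico_eq_sub _ (by omega), sub_div]
  have hrope : Tendsto (fun n : ℕ => D (2 * n) / n) atTop (𝓝 (2 * b)) := by
    have := (tendsto_const_div_atTop_nhds_zero_nat l0).add (tendsto_comp_two_mul_div hsl)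
    rw [zero_add] at this
    exact this.congr fun n => (add_div _ _ _).symm
  set M := max (2 * b) 0 + 1
  have hM : 0 < M := by positivity
  refine tendsto_atTop_of_monotone_of_add_le_double hTmono (div_pos (half_pos ha) hM) ?_
  filter_upwards [hcrawl.eventually (eventually_gt_nhds (half_lt_self ha)),
    hrope.eventually (eventually_lt_nhds (lt_of_le_of_lt (le_max_left _ 0) (lt_add_one _))),
    eventually_gt_atTop 0] with n hcrawl_n hrope_n hn
  have hnR : (0 : ℝ) < n := Nat.cast_pos.2 hn
  have hblock : a / 2 / M ≤ (∑ i ∈ Ico n (2 * n), x i) / D (2 * n) := by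
    rw [← div_div_div_cancel_right₀ hnR.ne' (∑ i ∈ Ico n (2 * n), x i)]
    exact div_le_div₀ (by linarith) hcrawl_n.le (div_pos (hD _) hnR) hrope_n.le
  have := (sum_Ico_div_le_sum_Ico_div hx hD hDmono n (2 * n)).trans_eq
    (sum_Ico_eq_sub (fun i => x i / D i) (by omega : n ≤ 2 * n))
  linarith

theorem ant_on_rubber_rope_series_diverges_general
    {Ω : Type*} [MeasurableSpace Ω] (μ : Measure Ω) [IsProbabilityMeasure μ]
    (X L : ℕ → Ω → ℝ) (l0 μX : ℝ) (hl0 : 0 < l0)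
    (hXpos : ∀ i, ∀ᵐ ω ∂μ, 0 < X i ω) (hLpos : ∀ i, ∀ᵐ ω ∂μ, 0 < L i ω)
    (hXindep : iIndepFun X μ)
    (hLindep : iIndepFun L μ)
    (hXident : ∀ i, IdentDistrib (X i) (X 0) μ μ)
    (hLident : ∀ i, IdentDistrib (L i) (L 0) μ μ)
    (hXint : ∀ i, Integrable (X i) μ) (hLint : ∀ i, Integrable (L i) μ)
    (hXmean : ∀ i, ∫ ω, X i ω ∂μ = μX)
    (hμX : 0 < μX) :
    ∀ᵐ ω ∂μ, Tendsto
      (fun n => ∑ i ∈ Finset.range n, X i ω / (l0 + ∑ j ∈ Finset.range i, L j ω))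
      atTop atTop := by
  have hXlaw := strong_law_ae_real X (hXint 0) (fun _ _ hij => hXindep.indepFun hij) hXident
  have hLlaw := strong_law_ae_real L (hLint 0) (fun _ _ hij => hLindep.indepFun hij) hLident
  filter_upwards [hXlaw, hLlaw, ae_all_iff.2 hXpos, ae_all_iff.2 hLpos] with ω hX hL hXω hLω
  exact tendsto_sum_div_add_partial_sum_atTop hl0 (fun i => (hXω i).le) (fun i => (hLω i).le)
    (hXmean 0 ▸ hμX) hX hL

/-- **Lemma 2: the stochastic "ant on a rubber rope" series diverges.**
`X i` is the distance crawled during the `(i+1)`-th second and `L j` (for `j = 0, 1, …`,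
playing the role of `L₁, L₂, …`) is the stretch at the end of the `(j+1)`-th second,
so the rope has length `l0 + ∑ j in range i, L j` after `i` stretchings.
Almost surely `X₀/l₀ + X₁/(l₀+L₁) + X₂/(l₀+L₁+L₂) + ⋯ = ∞`, i.e. the partial sums
tend to infinity. -/
theorem ant_on_rubber_rope_series_diverges
    {Ω : Type*} [MeasurableSpace Ω] (μ : Measure Ω) [IsProbabilityMeasure μ]
    (X L : ℕ → Ω → ℝ) (l0 μX μL : ℝ) (hl0 : 0 < l0)
    (hXmeas : ∀ i, Measurable (X i)) (hLmeas : ∀ i, Measurable (L i))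
    (hXpos : ∀ i, ∀ᵐ ω ∂μ, 0 < X i ω) (hLpos : ∀ i, ∀ᵐ ω ∂μ, 0 < L i ω)
    (hXindep : iIndepFun X μ)
    (hLindep : iIndepFun L μ)
    (hXident : ∀ i, IdentDistrib (X i) (X 0) μ μ)
    (hLident : ∀ i, IdentDistrib (L i) (L 0) μ μ)
    (hXint : ∀ i, Integrable (X i) μ) (hLint : ∀ i, Integrable (L i) μ)
    (hXmean : ∀ i, ∫ ω, X i ω ∂μ = μX) (hLmean : ∀ i, ∫ ω, L i ω ∂μ = μL)
    (hμX : 0 < μX) :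
    ∀ᵐ ω ∂μ, Tendsto
      (fun n => ∑ i ∈ Finset.range n, X i ω / (l0 + ∑ j ∈ Finset.range i, L j ω))
      atTop atTop :=
  ant_on_rubber_rope_series_diverges_general μ X L l0 μX hl0 hXpos hLpos hXindep hLindep hXident
    hLident hXint hLint hXmean hμX
end

section
/- Let (x_n)_{n≥1} be a sequence of reals, μ_X a real number, ε > 0, and N a positive integer such that |(x_1 + ... + x_n)/n − μ_X| < ε for all n ≥ N. Then for every integer i ≥ 1, the i-th block average satisfies |(x_{(i−1)N+1} + x_{(i−1)N+2} + ... + x_{iN})/N − μ_X| < (2i − 1)·ε. -/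
/-!
Writing `Sₙ = x₁ + ⋯ + xₙ`, the hypothesis gives `|Sₙ - nμ| < nε` for `n ≥ N`, and the `i`-th block
sum is `S_{iN} - S_{(i-1)N}`. The triangle inequality bounds its deviation from `Nμ` by
`iNε + (i-1)Nε = (2i-1)Nε`; the second term is `0` when `i = 1`, since `S₀ = 0`.
-/

open Finset

theorem sum_Icc_one_sub_sum_Icc_one {M : Type*} [AddCommGroup M] (x : ℕ → M) {m n : ℕ}
    (hmn : m ≤ n) :
    ∑ k ∈ Icc 1 n, x k - ∑ k ∈ Icc 1 m, x k = ∑ k ∈ Icc (m + 1) n, x k := by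
  have hIcc (k : ℕ) : Icc 1 k = Ioc 0 k := Icc_add_one_left_eq_Ioc 0 k
  rw [Icc_add_one_left_eq_Ioc, hIcc, hIcc, ← sum_Ioc_consecutive x m.zero_le hmn,
    add_sub_cancel_left]

theorem abs_sub_mul_lt_of_abs_div_sub_lt {s μ ε c : ℝ} (hc : 0 < c) (h : |s / c - μ| < ε) :
    |s - c * μ| < c * ε := by
  have hs : s - c * μ = c * (s / c - μ) := by field_simp
  rw [hs, abs_mul, abs_of_pos hc]
  exact mul_lt_mul_of_pos_left h hc

theorem abs_sum_Icc_sub_mul_le {x : ℕ → ℝ} {μ ε : ℝ} {n : ℕ}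
    (h : 0 < n → |(∑ k ∈ Icc 1 n, x k) / n - μ| < ε) :
    |∑ k ∈ Icc 1 n, x k - n * μ| ≤ n * ε := by
  rcases n.eq_zero_or_pos with rfl | hn
  · simp
  · exact (abs_sub_mul_lt_of_abs_div_sub_lt (Nat.cast_pos.mpr hn) (h hn)).le

theorem abs_sub_div_sub_lt_of_abs_sub_mul {A B μ ε p q c : ℝ} (hc : 0 < c) (hpq : p - q = c)
    (hA : |A - p * μ| < p * ε) (hB : |B - q * μ| ≤ q * ε) :
    |(A - B) / c - μ| < (p + q) * ε / c := by
  subst hpq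
  calc |(A - B) / (p - q) - μ| = |((A - p * μ) - (B - q * μ)) / (p - q)| := by
        congr 1
        field_simp
        ring
    _ = |(A - p * μ) - (B - q * μ)| / (p - q) := by rw [abs_div, abs_of_pos hc]
    _ ≤ (|A - p * μ| + |B - q * μ|) / (p - q) := by
        gcongr
        exact abs_sub _ _
    _ < (p + q) * ε / (p - q) := by
        rw [add_mul]
        exact div_lt_div_of_pos_right (add_lt_add_of_lt_of_le hA hB) hc

theorem block_average_estimate_general
    (x : ℕ → ℝ) (μX ε : ℝ) (N : ℕ) (hN : 0 < N)
    (h : ∀ n : ℕ, N ≤ n → |(∑ k ∈ Finset.Icc 1 n, x k) / n - μX| < ε) :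
    ∀ i : ℕ, 1 ≤ i →
      |(∑ k ∈ Finset.Icc ((i - 1) * N + 1) (i * N), x k) / N - μX|
        < (2 * (i : ℝ) - 1) * ε := by
  intro i hi
  obtain ⟨j, rfl⟩ := Nat.exists_eq_add_of_le' hi
  have hN' : (0 : ℝ) < N := Nat.cast_pos.mpr hN
  have hlast := abs_sub_mul_lt_of_abs_div_sub_lt (by positivity)
    (h ((j + 1) * N) (Nat.le_mul_of_pos_left N j.succ_pos))
  have hprev := abs_sum_Icc_sub_mul_le (x := x) (μ := μX) (ε := ε) (n := j * N)
    fun hj ↦ h _ (Nat.le_mul_of_pos_left N (Nat.pos_of_mul_pos_right hj))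
  push_cast at hlast hprev
  rw [Nat.add_sub_cancel, ← sum_Icc_one_sub_sum_Icc_one x (Nat.mul_le_mul_right N j.le_succ)]
  refine (abs_sub_div_sub_lt_of_abs_sub_mul hN' (by ring) hlast hprev).trans_eq ?_
  push_cast
  field_simp
  ring

/-- **Block-average estimate (inequality (8) in the proof of Lemma 2).**
If all running averages `(x₁ + ⋯ + xₙ)/n` with `n ≥ N` are within `ε` of `μX`,
then for every `i ≥ 1` the average of the `i`-th block of `N` consecutive terms,
`(x_{(i-1)N+1} + ⋯ + x_{iN})/N`, is within `(2i - 1)ε` of `μX`. -/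
theorem block_average_estimate
    (x : ℕ → ℝ) (μX ε : ℝ) (hε : 0 < ε) (N : ℕ) (hN : 0 < N)
    (h : ∀ n : ℕ, N ≤ n → |(∑ k ∈ Finset.Icc 1 n, x k) / n - μX| < ε) :
    ∀ i : ℕ, 1 ≤ i →
      |(∑ k ∈ Finset.Icc ((i - 1) * N + 1) (i * N), x k) / N - μX|
        < (2 * (i : ℝ) - 1) * ε :=
  block_average_estimate_general x μX ε N hN h
end

section
/- Let l_0 > 0, let (l_i)_{i≥1} and (x_i)_{i≥1} be sequences of positive reals, let μ_X > 0, μ_L > 0, ε > 0 with ε < μ_X, and let N be a positive integer such that |(l_0 + l_1 + ... + l_n)/n − μ_L| < ε and |(x_1 + ... + x_n)/n − μ_X| < ε for all n ≥ N. Then for every positive integer m, Σ_{i=1}^{mN} x_i/(l_0 + l_1 + ... + l_i) ≥ Σ_{k=1}^{m} (1/k) · (μ_X − (2k−1)ε)/(μ_L + ε). -/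
/-!
Split the first `mN` terms into `m` blocks of `N` terms. Write `Lₙ = l0 + l₁ + ⋯ + lₙ` and
`Sₙ = x₁ + ⋯ + xₙ`. On the `k`-th block every denominator is at most `L_{kN} ≤ kN(μL + ε)`, since
`L` is increasing, while the numerators add up to
`S_{kN} - S_{(k-1)N} ≥ kN(μX - ε) - (k-1)N(μX + ε) = N(μX - (2k-1)ε)`.
Dividing, the `k`-th block contributes at least `(1/k)(μX - (2k-1)ε)/(μL + ε)`.
-/

open Finset

lemma abs_div_sub_lt_iff {a n μ ε : ℝ} (hn : 0 < n) :
    |a / n - μ| < ε ↔ |a - n * μ| < n * ε := by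
  rw [← mul_lt_mul_iff_of_pos_left hn, ← abs_of_pos hn, ← abs_mul, abs_of_pos hn, mul_sub,
    mul_div_cancel₀ _ hn.ne']

lemma sum_Icc_one_eq_sum_range_succ {M : Type*} [AddCommMonoid M] (g : ℕ → M) (m : ℕ) :
    ∑ k ∈ Icc 1 m, g k = ∑ k ∈ range m, g (k + 1) := by
  rw [range_eq_Ico, sum_Ico_add', zero_add, Ico_add_one_right_eq_Icc]

lemma sum_Ioc_eq_sum_Icc_one_sub {M : Type*} [AddCommGroup M] (f : ℕ → M) {a b : ℕ}
    (hab : a ≤ b) : ∑ i ∈ Ioc a b, f i = ∑ i ∈ Icc 1 b, f i - ∑ i ∈ Icc 1 a, f i :=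
  eq_sub_of_add_eq' (sum_Ioc_consecutive f (Nat.zero_le a) hab)

lemma sum_Icc_one_mul_eq_sum_range_Ioc {M : Type*} [AddCommGroup M] (f : ℕ → M) (m N : ℕ) :
    ∑ i ∈ Icc 1 (m * N), f i = ∑ k ∈ range m, ∑ i ∈ Ioc (k * N) ((k + 1) * N), f i := by
  simp_rw [sum_Ioc_eq_sum_Icc_one_sub f (Nat.mul_le_mul_right N (Nat.le_succ _)),
    sum_range_sub (fun k ↦ ∑ i ∈ Icc 1 (k * N), f i)]
  simp

lemma sum_div_le_sum_div_of_le {ι : Type*} {s : Finset ι} {x L : ι → ℝ} {D : ℝ}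
    (hx : ∀ i ∈ s, 0 ≤ x i) (hL : ∀ i ∈ s, 0 < L i ∧ L i ≤ D) :
    (∑ i ∈ s, x i) / D ≤ ∑ i ∈ s, x i / L i := by
  rw [sum_div]
  exact sum_le_sum fun i hi ↦ div_le_div_of_nonneg_left (hx i hi) (hL i hi).1 (hL i hi).2

lemma mul_sub_le_sub_of_abs_div_sub_lt {S : ℕ → ℝ} {μ ε : ℝ} {N : ℕ} (hN : 0 < N)
    (hS0 : S 0 = 0) (hS : ∀ n, N ≤ n → |S n / n - μ| < ε) (k : ℕ) :
    N * (μ - (2 * k + 1) * ε) ≤ S ((k + 1) * N) - S (k * N) := by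
  have hclose (n : ℕ) (hn : N ≤ n) : |S n - n * μ| < n * ε :=
    (abs_div_sub_lt_iff (by exact_mod_cast hN.trans_le hn)).1 (hS n hn)
  have hupper := (abs_lt.1 (hclose ((k + 1) * N) (Nat.le_mul_of_pos_left N k.succ_pos))).1
  rcases k.eq_zero_or_pos with rfl | hk
  · simp only [Nat.cast_zero, zero_mul, zero_add, one_mul, hS0] at hupper ⊢
    linarith
  · have hlower := (abs_lt.1 (hclose (k * N) (Nat.le_mul_of_pos_left N hk))).2
    push_cast at hupper hlower ⊢
    linarith

lemma harmonic_block_le_sum_Ioc_div {x L : ℕ → ℝ} {μ c ε : ℝ} {N : ℕ} (hN : 0 < N)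
    (hx : ∀ i, 1 ≤ i → 0 ≤ x i) (hLpos : ∀ i, 0 < L i) (hLmono : Monotone L)
    (hL : ∀ n, N ≤ n → L n ≤ n * c) (hS : ∀ n, N ≤ n → |(∑ i ∈ Icc 1 n, x i) / n - μ| < ε)
    (k : ℕ) :
    1 / ((k + 1 : ℕ) : ℝ) * ((μ - (2 * ((k + 1 : ℕ) : ℝ) - 1) * ε) / c)
      ≤ ∑ i ∈ Ioc (k * N) ((k + 1) * N), x i / L i := by
  have hblock : N ≤ (k + 1) * N := Nat.le_mul_of_pos_left N k.succ_pos
  have hD : 0 < ((k + 1) * N : ℕ) * c := (hLpos _).trans_le (hL _ hblock)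
  have hc : 0 < c := pos_of_mul_pos_right hD (Nat.cast_nonneg _)
  have hnum : N * (μ - (2 * k + 1) * ε) ≤ ∑ i ∈ Ioc (k * N) ((k + 1) * N), x i := by
    rw [sum_Ioc_eq_sum_Icc_one_sub x (Nat.mul_le_mul_right N (Nat.le_succ k))]
    exact mul_sub_le_sub_of_abs_div_sub_lt hN (by simp) hS k
  have hden (i : ℕ) (hi : i ∈ Ioc (k * N) ((k + 1) * N)) :
      0 < L i ∧ L i ≤ ((k + 1) * N : ℕ) * c :=
    ⟨hLpos i, (hLmono (mem_Ioc.1 hi).2).trans (hL _ hblock)⟩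
  calc 1 / ((k + 1 : ℕ) : ℝ) * ((μ - (2 * ((k + 1 : ℕ) : ℝ) - 1) * ε) / c)
      = N * (μ - (2 * k + 1) * ε) / (((k + 1) * N : ℕ) * c) := by
        field_simp
        push_cast
        ring
    _ ≤ (∑ i ∈ Ioc (k * N) ((k + 1) * N), x i) / (((k + 1) * N : ℕ) * c) :=
        div_le_div_of_nonneg_right hnum hD.le
    _ ≤ ∑ i ∈ Ioc (k * N) ((k + 1) * N), x i / L i :=
        sum_div_le_sum_div_of_le (fun i hi ↦ hx i (by have := (mem_Ioc.1 hi).1; omega)) hden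

theorem ant_series_block_lower_bound_general
    (l0 : ℝ) (hl0 : 0 < l0) (l x : ℕ → ℝ)
    (hl : ∀ i, 1 ≤ i → 0 < l i) (hx : ∀ i, 1 ≤ i → 0 < x i)
    (μX μL ε : ℝ)
    (N : ℕ) (hN : 0 < N)
    (hlavg : ∀ n : ℕ, N ≤ n → |(l0 + ∑ i ∈ Finset.Icc 1 n, l i) / n - μL| < ε)
    (hxavg : ∀ n : ℕ, N ≤ n → |(∑ i ∈ Finset.Icc 1 n, x i) / n - μX| < ε) :
    ∀ m : ℕ, 1 ≤ m →
      ∑ k ∈ Finset.Icc 1 m, (1 / (k : ℝ)) * ((μX - (2 * (k : ℝ) - 1) * ε) / (μL + ε))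
        ≤ ∑ i ∈ Finset.Icc 1 (m * N), x i / (l0 + ∑ j ∈ Finset.Icc 1 i, l j) := by
  intro m _
  have hLpos (n : ℕ) : 0 < l0 + ∑ j ∈ Icc 1 n, l j :=
    add_pos_of_pos_of_nonneg hl0 (sum_nonneg fun j hj ↦ (hl j (mem_Icc.1 hj).1).le)
  have hLmono : Monotone fun n ↦ l0 + ∑ j ∈ Icc 1 n, l j := fun a b hab ↦
    add_le_add_right (sum_le_sum_of_subset_of_nonneg (Icc_subset_Icc_right hab)
      fun j hj _ ↦ (hl j (mem_Icc.1 hj).1).le) l0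
  have hLle (n : ℕ) (hn : N ≤ n) : l0 + ∑ j ∈ Icc 1 n, l j ≤ n * (μL + ε) := by
    have hn₀ : (0 : ℝ) < n := by exact_mod_cast hN.trans_le hn
    have := (abs_lt.1 ((abs_div_sub_lt_iff hn₀).1 (hlavg n hn))).2
    linarith
  rw [sum_Icc_one_eq_sum_range_succ, sum_Icc_one_mul_eq_sum_range_Ioc]
  exact sum_le_sum fun k _ ↦
    harmonic_block_le_sum_Ioc_div hN (fun i hi ↦ (hx i hi).le) hLpos hLmono hLle hxavg k

/-- **The chain of lower bounds in the proof of Lemma 2.**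
If for all `n ≥ N` the averages `(l0 + l₁ + ⋯ + lₙ)/n` and `(x₁ + ⋯ + xₙ)/n`
are within `ε` of `μL` and `μX` respectively (with `0 < ε < μX`), then for every
`m ≥ 1`, grouping the first `mN` terms of the series into `m` blocks of `N` terms gives
`∑_{i=1}^{mN} xᵢ/(l0 + l₁ + ⋯ + lᵢ) ≥ ∑_{k=1}^{m} (1/k) · (μX - (2k-1)ε)/(μL + ε)`. -/
theorem ant_series_block_lower_bound
    (l0 : ℝ) (hl0 : 0 < l0) (l x : ℕ → ℝ)
    (hl : ∀ i, 1 ≤ i → 0 < l i) (hx : ∀ i, 1 ≤ i → 0 < x i)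
    (μX μL ε : ℝ) (hμX : 0 < μX) (hμL : 0 < μL) (hε : 0 < ε) (hεX : ε < μX)
    (N : ℕ) (hN : 0 < N)
    (hlavg : ∀ n : ℕ, N ≤ n → |(l0 + ∑ i ∈ Finset.Icc 1 n, l i) / n - μL| < ε)
    (hxavg : ∀ n : ℕ, N ≤ n → |(∑ i ∈ Finset.Icc 1 n, x i) / n - μX| < ε) :
    ∀ m : ℕ, 1 ≤ m →
      ∑ k ∈ Finset.Icc 1 m, (1 / (k : ℝ)) * ((μX - (2 * (k : ℝ) - 1) * ε) / (μL + ε))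
        ≤ ∑ i ∈ Finset.Icc 1 (m * N), x i / (l0 + ∑ j ∈ Finset.Icc 1 i, l j) :=
  ant_series_block_lower_bound_general l0 hl0 l x hl hx μX μL ε N hN hlavg hxavg
end
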